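/- arXiv:2204.01347 — 3 statements merged into one kernel-verified Lean document; each statement's English description precedes it below -/
import Mathlib

section
/- For positive integers n and s, the odd harmonic sum H̄_n(s) = Σ_{k=0}^{n-1} 1/(2k+1)^s satisfies H̄_n(s) = Σ_{k=1}^{n} (-1)^{k-1}·C(n,k)·Σ_{l=0}^{k-1} ((1/2)_l)^s · (1-k)_l / (((3/2)_l)^s · l!). -/
open Finset

noncomputable def rising (a : ℝ) (l : ℕ) : ℝ := ∏ i ∈ Finset.range l, (a + (i : ℝ))

lemma rising_half_pos (l : ℕ) : 0 < rising (1/2) l := by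
  apply Finset.prod_pos
  intro i _
  positivity

lemma rising_three_halves (l : ℕ) : rising (3/2) l = (2*l+1) * rising (1/2) l := by
  induction l with
  | zero => simp [rising]
  | succ l ih =>
      simp only [rising, Finset.prod_range_succ] at *
      rw [ih]
      push_cast
      ring

lemma rising_one_sub (k : ℕ) : ∀ l < k,
    rising (1 - (k:ℝ)) l = (-1)^l * (Nat.factorial l) * ((k-1).choose l) := by
  intro l
  induction l with
  | zero => intro _; simp [rising]
  | succ l ih =>
      intro hlk
      have hl : l < k := Nat.lt_of_succ_lt hlk
      simp only [rising, Finset.prod_range_succ] at *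
      rw [ih hl]
      have hc := Nat.choose_succ_right_eq (k-1) l
      have hcast : ((k - 1 - l : ℕ) : ℝ) = (k : ℝ) - 1 - l := by
        push_cast [Nat.cast_sub (by omega : l ≤ k - 1), Nat.cast_sub (by omega : 1 ≤ k)]
        ring
      have hcR : ((k-1).choose (l+1) : ℝ) * (l+1) = ((k-1).choose l : ℝ) * ((k:ℝ) - 1 - l) := by
        rw [← hcast]
        exact_mod_cast congrArg (Nat.cast : ℕ → ℝ) hc
      push_cast [Nat.factorial_succ]
      linear_combination ((-1:ℝ)^l * (Nat.factorial l : ℝ)) * hcR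

lemma delta_sum (n l : ℕ) (hl : l ≤ n) :
    ∑ j ∈ Finset.range (n+1), (-1:ℝ)^(j+l) * (n.choose j) * (j.choose l)
      = if l = n then 1 else 0 := by
  have hsub : Finset.Icc l n ⊆ Finset.range (n+1) := by
    intro x hx; simp only [Finset.mem_Icc] at hx; simp; omega
  rw [← Finset.sum_subset hsub (by
    intro x hxr hx
    simp only [Finset.mem_range] at hxr
    simp only [Finset.mem_Icc, not_and, not_le] at hx
    have hxl : x < l := by
      by_contra h
      push_neg at h
      exact absurd (hx h) (by omega)
    rw [Nat.choose_eq_zero_of_lt hxl]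
    simp)]
  have hIcc : Finset.Icc l n = Finset.Ico l (n+1) := by
    ext x; simp [Nat.lt_succ_iff]
  rw [hIcc, Finset.sum_Ico_eq_sum_range]
  have hrw : ∀ i ∈ Finset.range (n + 1 - l),
      (-1:ℝ)^(l+i+l) * (n.choose (l+i)) * ((l+i).choose l)
        = (n.choose l : ℝ) * ((-1:ℝ)^i * ((n-l).choose i)) := by
    intro i hi
    simp only [Finset.mem_range] at hi
    have h1 : n.choose (l+i) * (l+i).choose l = n.choose l * (n-l).choose (l+i-l) :=
      Nat.choose_mul (by omega)
    have h2 : l + i - l = i := by omega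
    rw [h2] at h1
    have h3 : ((n.choose (l+i) : ℝ) * ((l+i).choose l)) = (n.choose l : ℝ) * ((n-l).choose i) := by
      exact_mod_cast congrArg (Nat.cast : ℕ → ℝ) h1
    have h4 : (-1:ℝ)^(l+i+l) = (-1:ℝ)^i := by
      rw [show l+i+l = i + 2*l by ring, pow_add, pow_mul]
      simp
    rw [h4]
    linear_combination ((-1:ℝ)^i) * h3
  rw [Finset.sum_congr rfl hrw, ← Finset.mul_sum]
  have hkey : ∑ i ∈ Finset.range (n + 1 - l), (-1:ℝ)^i * ((n-l).choose i)
      = if n - l = 0 then 1 else 0 := by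
    have h := @Int.alternating_sum_range_choose (n - l)
    rw [show n + 1 - l = (n - l) + 1 by omega]
    exact_mod_cast h
  rw [hkey]
  rcases eq_or_ne l n with h | h
  · subst h; simp
  · rw [if_neg (by omega), if_neg h, mul_zero]

lemma key_sum : ∀ n, ∀ l ≤ n,
    ∑ j ∈ Finset.range (n+1), (-1:ℝ)^(j+l) * ((n+1).choose (j+1)) * (j.choose l) = 1 := by
  intro n
  induction n with
  | zero =>
      intro l hl
      interval_cases l
      simp
  | succ n ih =>
      intro l hl
      have hsplit : ∀ j ∈ Finset.range (n+2),
          (-1:ℝ)^(j+l) * ((n+2).choose (j+1)) * (j.choose l)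
            = (-1:ℝ)^(j+l) * ((n+1).choose j) * (j.choose l)
              + (-1:ℝ)^(j+l) * ((n+1).choose (j+1)) * (j.choose l) := by
        intro j _
        rw [Nat.choose_succ_succ (n+1) j]
        push_cast
        ring
      rw [Finset.sum_congr rfl hsplit, Finset.sum_add_distrib]
      have hD := delta_sum (n+1) l (by omega)
      rw [hD]
      have hA : ∑ j ∈ Finset.range (n+2), (-1:ℝ)^(j+l) * ((n+1).choose (j+1)) * (j.choose l)
          = ∑ j ∈ Finset.range (n+1), (-1:ℝ)^(j+l) * ((n+1).choose (j+1)) * (j.choose l) := by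
        rw [Finset.sum_range_succ, Nat.choose_succ_self (n+1)]
        simp
      rw [hA]
      rcases eq_or_ne l (n+1) with h | h
      · subst h
        have hz : ∀ j ∈ Finset.range (n+1),
            (-1:ℝ)^(j+(n+1)) * ((n+1).choose (j+1)) * (j.choose (n+1)) = 0 := by
          intro j hj
          simp only [Finset.mem_range] at hj
          rw [Nat.choose_eq_zero_of_lt (show j < n+1 by omega)]
          simp
        rw [Finset.sum_congr rfl hz]
        simp
      · rw [ih l (by omega), if_neg h]
        simp

lemma key_Icc (n l : ℕ) (hl : l < n) :
    ∑ k ∈ Finset.Icc 1 n, (-1:ℝ)^((k-1)+l) * (n.choose k) * ((k-1).choose l) = 1 := by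
  obtain ⟨m, rfl⟩ : ∃ m, n = m + 1 := ⟨n - 1, by omega⟩
  have hIcc : Finset.Icc 1 (m+1) = Finset.Ico 1 (m+2) := by
    ext x; simp [Nat.lt_succ_iff]
  rw [hIcc, Finset.sum_Ico_eq_sum_range, show m + 2 - 1 = m + 1 from rfl]
  have hco : ∀ j ∈ Finset.range (m + 1),
      (-1:ℝ)^((1+j-1)+l) * ((m+1).choose (1+j)) * ((1+j-1).choose l)
        = (-1:ℝ)^(j+l) * ((m+1).choose (j+1)) * (j.choose l) := by
    intro j _
    have h1 : 1 + j - 1 = j := by omega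
    rw [h1, Nat.add_comm 1 j]
  rw [Finset.sum_congr rfl hco]
  exact key_sum m l (by omega)

theorem odd_harmonic_eval (n s : ℕ) (hn : 1 ≤ n) (hs : 1 ≤ s) :
    ∑ k ∈ Finset.range n, (1 : ℝ) / (2 * (k : ℝ) + 1) ^ s =
      ∑ k ∈ Finset.Icc 1 n, (-1 : ℝ) ^ (k - 1) * (n.choose k : ℝ) *
        ∑ l ∈ Finset.range k,
          (rising (1 / 2) l) ^ s * rising (1 - (k : ℝ)) l /
            ((rising (3 / 2) l) ^ s * (Nat.factorial l : ℝ)) := by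
  symm
  have hterm : ∀ k ∈ Finset.Icc 1 n, ∀ l ∈ Finset.range k,
      (rising (1 / 2) l) ^ s * rising (1 - (k : ℝ)) l /
          ((rising (3 / 2) l) ^ s * (Nat.factorial l : ℝ))
        = (-1:ℝ)^l * ((k-1).choose l) / (2 * (l:ℝ) + 1) ^ s := by
    intro k hk l hl
    simp only [Finset.mem_range] at hl
    rw [rising_one_sub k l hl, rising_three_halves]
    have h1 : rising (1/2) l ≠ 0 := ne_of_gt (rising_half_pos l)
    have h2 : (Nat.factorial l : ℝ) ≠ 0 := by positivity
    have h3 : (2 * (l:ℝ) + 1) ≠ 0 := by positivity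
    field_simp [mul_pow]
    rw [mul_pow]
    ring
  calc
    ∑ k ∈ Finset.Icc 1 n, (-1 : ℝ) ^ (k - 1) * (n.choose k : ℝ) *
        ∑ l ∈ Finset.range k,
          (rising (1 / 2) l) ^ s * rising (1 - (k : ℝ)) l /
            ((rising (3 / 2) l) ^ s * (Nat.factorial l : ℝ))
      = ∑ k ∈ Finset.Icc 1 n, ∑ l ∈ Finset.range n,
          (-1 : ℝ) ^ (k - 1) * (n.choose k : ℝ) *
            ((-1:ℝ)^l * ((k-1).choose l) / (2 * (l:ℝ) + 1) ^ s) := by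
        refine Finset.sum_congr rfl fun k hk => ?_
        rw [Finset.sum_congr rfl (hterm k hk)]
        rw [Finset.mul_sum]
        refine Finset.sum_subset ?_ ?_
        · intro x hx
          simp only [Finset.mem_Icc] at hk
          simp only [Finset.mem_range] at *
          omega
        · intro x _ hx
          simp only [Finset.mem_range, not_lt] at hx
          simp only [Finset.mem_Icc] at hk
          rw [Nat.choose_eq_zero_of_lt (show k - 1 < x by omega)]
          simp
    _ = ∑ l ∈ Finset.range n, ∑ k ∈ Finset.Icc 1 n,
          (-1 : ℝ) ^ (k - 1) * (n.choose k : ℝ) *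
            ((-1:ℝ)^l * ((k-1).choose l) / (2 * (l:ℝ) + 1) ^ s) := Finset.sum_comm
    _ = ∑ l ∈ Finset.range n, (1 : ℝ) / (2 * (l:ℝ) + 1) ^ s := by
        refine Finset.sum_congr rfl fun l hl => ?_
        simp only [Finset.mem_range] at hl
        have hkk := key_Icc n l hl
        have hsw : ∀ k ∈ Finset.Icc 1 n,
            (-1:ℝ)^(k-1) * (n.choose k : ℝ) * ((-1:ℝ)^l * ((k-1).choose l) / (2 * (l:ℝ) + 1) ^ s)
              = ((-1:ℝ)^((k-1)+l) * (n.choose k : ℝ) * ((k-1).choose l)) * (1 / (2 * (l:ℝ) + 1) ^ s) := by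
          intro k _
          rw [pow_add]
          ring
        rw [Finset.sum_congr rfl hsw, ← Finset.sum_mul, hkk, one_mul]
end

section
/- For positive integers n and s, Σ_{l=0}^{n-1} ((1/2)_l)^s·(1-n)_l·(-1)^l/(((3/2)_l)^s·l!) = Σ_{k=1}^{n} (-1)^{k-1}·C(n,k)·H̄_k(s̄), where H̄_k(s̄) = Σ_{j=0}^{k-1} (-1)^j/(2j+1)^s. -/
open Finset

lemma rising_zero (a : ℝ) : rising a 0 = 1 := by simp [rising]

lemma rising_succ (a : ℝ) (l : ℕ) : rising a (l + 1) = rising a l * (a + l) := by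
  simp [rising, Finset.prod_range_succ]

lemma rising_pos {a : ℝ} (ha : 0 < a) (l : ℕ) : 0 < rising a l := by
  refine Finset.prod_pos fun i _ => by positivity

lemma rising32 (l : ℕ) : rising (3/2) l = (2 * l + 1) * rising (1/2) l := by
  induction l with
  | zero => simp [rising_zero]
  | succ l ih =>
    rw [rising_succ, ih, rising_succ]
    push_cast
    ring

lemma rising_int (n l : ℕ) (h : l < n) :
    rising (1 - (n : ℝ)) l = (-1) ^ l * (l.factorial : ℝ) * ((n - 1).choose l : ℝ) := by
  induction l with
  | zero => simp [rising_zero]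
  | succ l ih =>
    have hl : l < n := Nat.lt_of_succ_lt h
    rw [rising_succ, ih hl]
    have h1 : ((n - 1 - l : ℕ) : ℝ) = (n : ℝ) - 1 - l := by
      push_cast [Nat.cast_sub (by omega : l ≤ n - 1), Nat.cast_sub (by omega : 1 ≤ n)]
      ring
    have h2 : (n - 1).choose (l + 1) * (l + 1) = (n - 1).choose l * (n - 1 - l) :=
      Nat.choose_succ_right_eq _ _
    have h2' : ((n - 1).choose (l + 1) : ℝ) * (l + 1) = ((n - 1).choose l : ℝ) * ((n:ℝ) - 1 - l) := by
      rw [← h1]; exact_mod_cast congrArg (Nat.cast : ℕ → ℝ) h2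
    have hfac : (Nat.factorial (l+1) : ℝ) = (l+1) * l.factorial := by
      rw [Nat.factorial_succ]; push_cast; ring
    rw [hfac]
    linear_combination ((-1:ℝ)^l * (l.factorial : ℝ)) * h2'

lemma altsum (m j : ℕ) :
    ∑ k ∈ range (j + 1), (-1 : ℝ) ^ k * ((m + 1).choose k : ℝ)
      = (-1) ^ j * (m.choose j : ℝ) := by
  induction j with
  | zero => simp
  | succ j ih =>
    rw [Finset.sum_range_succ, ih, Nat.choose_succ_succ]
    push_cast
    ring

lemma tailsum (m j : ℕ) (hj : j ≤ m) :
    ∑ k ∈ Finset.Icc (j + 1) (m + 1), (-1 : ℝ) ^ (k - 1) * ((m + 1).choose k : ℝ)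
      = (-1) ^ j * (m.choose j : ℝ) := by
  have hfull : ∑ k ∈ range (m + 2), (-1 : ℝ) ^ k * ((m + 1).choose k : ℝ) = 0 := by
    have := altsum m (m + 1)
    simpa [Nat.choose_succ_self] using this
  have hsplit : ∑ k ∈ Finset.Ico 0 (j + 1), (-1 : ℝ) ^ k * ((m + 1).choose k : ℝ)
      + ∑ k ∈ Finset.Ico (j + 1) (m + 2), (-1 : ℝ) ^ k * ((m + 1).choose k : ℝ)
      = ∑ k ∈ Finset.Ico 0 (m + 2), (-1 : ℝ) ^ k * ((m + 1).choose k : ℝ) :=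
    Finset.sum_Ico_consecutive _ (by omega) (by omega)
  rw [← Finset.range_eq_Ico] at hsplit
  rw [altsum, ← Finset.range_eq_Ico, hfull] at hsplit
  have hIcc : Finset.Icc (j + 1) (m + 1) = Finset.Ico (j + 1) (m + 2) := by
    ext k; simp; omega
  rw [hIcc]
  have hsign : ∀ k ∈ Finset.Ico (j + 1) (m + 2),
      (-1 : ℝ) ^ (k - 1) * ((m + 1).choose k : ℝ)
        = -((-1 : ℝ) ^ k * ((m + 1).choose k : ℝ)) := by
    intro k hk
    simp only [Finset.mem_Ico] at hk
    obtain ⟨i, rfl⟩ : ∃ i, k = i + 1 := ⟨k - 1, by omega⟩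
    simp only [Nat.add_sub_cancel, pow_succ]
    ring
  rw [Finset.sum_congr rfl hsign]
  rw [Finset.sum_neg_distrib]
  linarith [hsplit]

theorem hypergeom_odd_alt_harmonic_inversion (n s : ℕ) (hn : 1 ≤ n) (hs : 1 ≤ s) :
    ∑ l ∈ Finset.range n,
        (rising (1 / 2) l) ^ s * rising (1 - (n : ℝ)) l * (-1 : ℝ) ^ l /
          ((rising (3 / 2) l) ^ s * (Nat.factorial l : ℝ)) =
      ∑ k ∈ Finset.Icc 1 n, (-1 : ℝ) ^ (k - 1) * (n.choose k : ℝ) *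
        ∑ j ∈ Finset.range k, (-1 : ℝ) ^ j / (2 * (j : ℝ) + 1) ^ s := by
  obtain ⟨m, rfl⟩ : ∃ m, n = m + 1 := ⟨n - 1, by omega⟩
  -- LHS simplification
  have hLHS : ∀ l ∈ Finset.range (m + 1),
      (rising (1 / 2) l) ^ s * rising (1 - ((m + 1 : ℕ) : ℝ)) l * (-1 : ℝ) ^ l /
          ((rising (3 / 2) l) ^ s * (Nat.factorial l : ℝ))
        = (m.choose l : ℝ) / (2 * l + 1) ^ s := by
    intro l hl
    rw [Finset.mem_range] at hl
    rw [rising_int _ _ hl, rising32]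
    have hr : (0:ℝ) < rising (1/2) l := rising_pos (by norm_num) l
    have hf : (0:ℝ) < (l.factorial : ℝ) := by exact_mod_cast Nat.factorial_pos l
    have hq : (0:ℝ) < 2 * (l:ℝ) + 1 := by positivity
    have hcancel : ((-1:ℝ)^l * (-1:ℝ)^l) = 1 := by
      rw [← mul_pow]; norm_num
    simp only [Nat.add_sub_cancel]
    rw [mul_pow]
    have e1 : rising (1/2) l ^ s * ((-1:ℝ)^l * (l.factorial : ℝ) * (m.choose l : ℝ)) * (-1:ℝ)^l
        = (m.choose l : ℝ) * (rising (1/2) l ^ s * (l.factorial : ℝ)) := by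
      calc rising (1/2) l ^ s * ((-1:ℝ)^l * (l.factorial : ℝ) * (m.choose l : ℝ)) * (-1:ℝ)^l
          = (m.choose l : ℝ) * (rising (1/2) l ^ s * (l.factorial : ℝ)) * ((-1:ℝ)^l * (-1:ℝ)^l) := by ring
        _ = (m.choose l : ℝ) * (rising (1/2) l ^ s * (l.factorial : ℝ)) := by rw [hcancel, mul_one]
    rw [e1]
    rw [eq_div_iff (by positivity)]
    field_simp
  rw [Finset.sum_congr rfl hLHS]
  -- RHS: swap sums
  have hRHS : ∑ k ∈ Finset.Icc 1 (m + 1), (-1 : ℝ) ^ (k - 1) * ((m+1).choose k : ℝ) *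
        ∑ j ∈ Finset.range k, (-1 : ℝ) ^ j / (2 * (j : ℝ) + 1) ^ s
      = ∑ j ∈ Finset.range (m + 1),
          (∑ k ∈ Finset.Icc (j + 1) (m + 1), (-1 : ℝ) ^ (k - 1) * ((m+1).choose k : ℝ))
            * ((-1 : ℝ) ^ j / (2 * (j : ℝ) + 1) ^ s) := by
    have step1 : ∀ k ∈ Finset.Icc 1 (m + 1),
        (-1 : ℝ) ^ (k - 1) * ((m+1).choose k : ℝ) *
          ∑ j ∈ Finset.range k, (-1 : ℝ) ^ j / (2 * (j : ℝ) + 1) ^ s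
        = ∑ j ∈ Finset.range (m + 1),
            (if j < k then (-1 : ℝ) ^ (k - 1) * ((m+1).choose k : ℝ) *
              ((-1 : ℝ) ^ j / (2 * (j : ℝ) + 1) ^ s) else 0) := by
      intro k hk
      rw [Finset.mem_Icc] at hk
      rw [Finset.mul_sum, Finset.sum_ite, Finset.sum_const_zero, add_zero]
      apply Finset.sum_congr
      · ext j; simp; omega
      · intros; rfl
    rw [Finset.sum_congr rfl step1, Finset.sum_comm]
    apply Finset.sum_congr rfl
    intro j hj
    rw [Finset.sum_ite, Finset.sum_const_zero, add_zero, ← Finset.sum_mul]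
    congr 1
    apply Finset.sum_congr
    · ext k; simp; omega
    · intros; rfl
  rw [hRHS]
  apply Finset.sum_congr rfl
  intro j hj
  rw [Finset.mem_range] at hj
  have hcancel : ((-1:ℝ)^j * (-1:ℝ)^j) = 1 := by rw [← mul_pow]; norm_num
  rw [tailsum m j (by omega),
    show ((-1:ℝ)^j * (m.choose j : ℝ)) * ((-1:ℝ)^j / (2*(j:ℝ)+1)^s)
      = (m.choose j : ℝ) / (2*(j:ℝ)+1)^s * ((-1:ℝ)^j * (-1:ℝ)^j) from by ring,
    hcancel, mul_one]
end

section
/- For positive integers n and s, the harmonic sum H_n(s) = Σ_{k=1}^{n} 1/k^s satisfies H_n(s) = Σ_{k=1}^{n} (-1)^{k-1}·C(n,k)·Σ_{l=0}^{k-1} ((1)_l)^s·(1-k)_l/(((2)_l)^s·l!). -/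
open Finset

lemma rising_one (l : ℕ) : rising 1 l = (Nat.factorial l : ℝ) := by
  induction l with
  | zero => simp [rising]
  | succ l ih =>
      rw [rising, Finset.prod_range_succ, ← rising, ih, Nat.factorial_succ]
      push_cast; ring

lemma rising_two (l : ℕ) : rising 2 l = (Nat.factorial (l + 1) : ℝ) := by
  induction l with
  | zero => simp [rising]
  | succ l ih =>
      rw [rising, Finset.prod_range_succ, ← rising, ih, Nat.factorial_succ (l+1)]
      push_cast; ring

lemma rising_neg (j l : ℕ) (h : l ≤ j) :
    rising (-(j : ℝ)) l * (Nat.factorial (j - l) : ℝ) =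
      (-1 : ℝ) ^ l * (Nat.factorial j : ℝ) := by
  induction l with
  | zero => simp [rising]
  | succ l ih =>
      have hl : l ≤ j := Nat.le_of_succ_le h
      have h1 : 1 ≤ j - l := by omega
      have hfact : (Nat.factorial (j - l) : ℝ) =
          ((j - l : ℕ) : ℝ) * (Nat.factorial (j - (l + 1)) : ℝ) := by
        have : j - l = (j - (l + 1)) + 1 := by omega
        rw [this, Nat.factorial_succ]; push_cast; ring
      have hcast : (-(j : ℝ) + l) = -((j - l : ℕ) : ℝ) := by
        rw [Nat.cast_sub hl]; ring
      have hne : ((j - l : ℕ) : ℝ) ≠ 0 := by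
        have : 0 < j - l := h1
        positivity
      rw [rising, Finset.prod_range_succ, ← rising, hcast]
      have := ih hl
      rw [hfact] at this
      calc rising (-(j : ℝ)) l * -((j - l : ℕ) : ℝ) * (Nat.factorial (j - (l+1)) : ℝ)
          = -(rising (-(j : ℝ)) l * (((j - l : ℕ) : ℝ) * (Nat.factorial (j - (l+1)) : ℝ))) := by ring
        _ = -((-1 : ℝ) ^ l * (Nat.factorial j : ℝ)) := by linear_combination -this
        _ = (-1 : ℝ) ^ (l + 1) * (Nat.factorial j : ℝ) := by ring

/-- the inner term simplifies -/
lemma term_eq (s j l : ℕ) (h : l ≤ j) :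
    (rising 1 l) ^ s * rising (-(j : ℝ)) l /
      ((rising 2 l) ^ s * (Nat.factorial l : ℝ)) =
    (-1 : ℝ) ^ l * (j.choose l : ℝ) / ((l + 1 : ℝ)) ^ s := by
  have hf0 : (Nat.factorial l : ℝ) ≠ 0 := by positivity
  have hf1 : (Nat.factorial (j - l) : ℝ) ≠ 0 := by positivity
  have hrising := rising_neg j l h
  have hcN : (j.choose l : ℝ) * (Nat.factorial l : ℝ) * (Nat.factorial (j - l) : ℝ) =
      (Nat.factorial j : ℝ) := by
    exact_mod_cast congrArg (Nat.cast (R := ℝ)) (Nat.choose_mul_factorial_mul_factorial h)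
  have hfs : (Nat.factorial (l + 1) : ℝ) = ((l : ℝ) + 1) * (Nat.factorial l : ℝ) := by
    rw [Nat.factorial_succ]; push_cast; ring
  have hd1 : ((rising 2 l) ^ s * (Nat.factorial l : ℝ)) ≠ 0 := by
    rw [rising_two]
    positivity
  have hd2 : ((l + 1 : ℝ)) ^ s ≠ 0 := by positivity
  rw [div_eq_div_iff hd1 hd2, rising_one, rising_two]
  apply mul_right_cancel₀ hf1
  rw [hfs, mul_pow]
  linear_combination ((Nat.factorial l : ℝ) ^ s * ((l : ℝ) + 1) ^ s) * hrising -
    ((-1 : ℝ) ^ l * ((l : ℝ) + 1) ^ s * (Nat.factorial l : ℝ) ^ s) * hcN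

lemma alt_zero (n l : ℕ) (h : l < n) :
    ∑ j ∈ Finset.range (n + 1), (-1 : ℝ) ^ j * (n.choose j : ℝ) * (j.choose l : ℝ) = 0 := by
  rw [Finset.range_eq_Ico, ← Finset.sum_Ico_consecutive _ (Nat.zero_le l) (by omega : l ≤ n+1)]
  have h1 : ∑ j ∈ Finset.Ico 0 l, (-1 : ℝ) ^ j * (n.choose j : ℝ) * (j.choose l : ℝ) = 0 := by
    apply Finset.sum_eq_zero
    intro j hj
    simp only [Finset.mem_Ico] at hj
    rw [Nat.choose_eq_zero_of_lt hj.2]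
    simp
  rw [h1, zero_add, Finset.sum_Ico_eq_sum_range]
  have h2 : n + 1 - l = (n - l) + 1 := by omega
  rw [h2]
  have key : ∀ i ∈ Finset.range ((n - l) + 1),
      (-1 : ℝ) ^ (l + i) * (n.choose (l + i) : ℝ) * ((l + i).choose l : ℝ) =
      (-1 : ℝ) ^ l * (n.choose l : ℝ) * ((-1 : ℝ) ^ i * ((n - l).choose i : ℝ)) := by
    intro i hi
    simp only [Finset.mem_range] at hi
    have hkn : l + i ≤ n := by omega
    have hsk : l ≤ l + i := Nat.le_add_right l i
    have := Nat.choose_mul (n := n) hsk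
    have hc : (n.choose (l + i) : ℝ) * ((l + i).choose l : ℝ) =
        (n.choose l : ℝ) * ((n - l).choose i : ℝ) := by
      have h3 : l + i - l = i := by omega
      exact_mod_cast (by rw [this, h3] : n.choose (l+i) * (l+i).choose l = n.choose l * (n-l).choose i)
    rw [pow_add]
    linear_combination ((-1 : ℝ) ^ l * (-1 : ℝ) ^ i) * hc
  rw [Finset.sum_congr rfl key, ← Finset.mul_sum]
  have hz : ∑ i ∈ Finset.range ((n - l) + 1), (-1 : ℝ) ^ i * ((n - l).choose i : ℝ) = 0 := by
    have := Int.alternating_sum_range_choose_of_ne (n := n - l) (by omega)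
    have := congrArg (Int.cast : ℤ → ℝ) this
    push_cast at this
    convert this using 2
  rw [hz, mul_zero]

lemma key_one : ∀ (n : ℕ), ∀ l < n,
    ∑ j ∈ Finset.range n, (-1 : ℝ) ^ (j + l) * (n.choose (j + 1) : ℝ) * (j.choose l : ℝ) = 1 := by
  intro n
  induction n with
  | zero => intro l hl; omega
  | succ n ih =>
      intro l hl
      have hsplit : ∀ j, ((n + 1).choose (j + 1) : ℝ) = (n.choose j : ℝ) + (n.choose (j + 1) : ℝ) := by
        intro j; rw [Nat.choose_succ_succ']; push_cast; ring
      have : ∑ j ∈ Finset.range (n + 1),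
          (-1 : ℝ) ^ (j + l) * ((n + 1).choose (j + 1) : ℝ) * (j.choose l : ℝ) =
          (∑ j ∈ Finset.range (n + 1), (-1 : ℝ) ^ (j + l) * (n.choose j : ℝ) * (j.choose l : ℝ)) +
          (∑ j ∈ Finset.range (n + 1), (-1 : ℝ) ^ (j + l) * (n.choose (j + 1) : ℝ) * (j.choose l : ℝ)) := by
        rw [← Finset.sum_add_distrib]
        apply Finset.sum_congr rfl
        intro j _
        rw [hsplit]; ring
      rw [this]
      rcases Nat.lt_or_ge l n with hln | hge
      · -- l < n
        have hA : ∑ j ∈ Finset.range (n + 1),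
            (-1 : ℝ) ^ (j + l) * (n.choose j : ℝ) * (j.choose l : ℝ) = 0 := by
          have := alt_zero n l hln
          calc ∑ j ∈ Finset.range (n + 1), (-1 : ℝ) ^ (j + l) * (n.choose j : ℝ) * (j.choose l : ℝ)
              = (-1 : ℝ) ^ l * ∑ j ∈ Finset.range (n + 1), (-1 : ℝ) ^ j * (n.choose j : ℝ) * (j.choose l : ℝ) := by
                rw [Finset.mul_sum]; apply Finset.sum_congr rfl; intro j _; rw [pow_add]; ring
            _ = 0 := by rw [this, mul_zero]
        have hB : ∑ j ∈ Finset.range (n + 1),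
            (-1 : ℝ) ^ (j + l) * (n.choose (j + 1) : ℝ) * (j.choose l : ℝ) = 1 := by
          rw [Finset.sum_range_succ, Nat.choose_succ_self]
          simp only [Nat.cast_zero, mul_zero, zero_mul, add_zero]
          exact ih l hln
        rw [hA, hB, zero_add]
      · -- l = n
        have hle : l = n := by omega
        subst hle
        have hA : ∑ j ∈ Finset.range (l + 1),
            (-1 : ℝ) ^ (j + l) * (l.choose j : ℝ) * (j.choose l : ℝ) = 1 := by
          rw [Finset.sum_range_succ]
          have hz : ∑ j ∈ Finset.range l,
              (-1 : ℝ) ^ (j + l) * (l.choose j : ℝ) * (j.choose l : ℝ) = 0 := by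
            apply Finset.sum_eq_zero
            intro j hj
            simp only [Finset.mem_range] at hj
            rw [Nat.choose_eq_zero_of_lt hj]; simp
          rw [hz, zero_add]
          simp only [Nat.choose_self, Nat.cast_one, mul_one, ← two_mul, pow_mul]
          norm_num
        have hB : ∑ j ∈ Finset.range (l + 1),
            (-1 : ℝ) ^ (j + l) * (l.choose (j + 1) : ℝ) * (j.choose l : ℝ) = 0 := by
          apply Finset.sum_eq_zero
          intro j hj
          simp only [Finset.mem_range] at hj
          rcases Nat.lt_or_ge j l with hjl | hjl
          · rw [Nat.choose_eq_zero_of_lt hjl]; simp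
          · have : j = l := by omega
            subst this
            rw [Nat.choose_succ_self]; simp
        rw [hA, hB, add_zero]

theorem harmonic_eval (n s : ℕ) (hn : 1 ≤ n) (hs : 1 ≤ s) :
    ∑ k ∈ Finset.Icc 1 n, (1 : ℝ) / (k : ℝ) ^ s =
      ∑ k ∈ Finset.Icc 1 n, (-1 : ℝ) ^ (k - 1) * (n.choose k : ℝ) *
        ∑ l ∈ Finset.range k,
          (rising 1 l) ^ s * rising (1 - (k : ℝ)) l /
            ((rising 2 l) ^ s * (Nat.factorial l : ℝ)) := by
  have hIcc : Finset.Icc 1 n = Finset.Ico 1 (n + 1) := (Finset.Ico_add_one_right_eq_Icc 1 n).symm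
  rw [hIcc, Finset.sum_Ico_eq_sum_range, Finset.sum_Ico_eq_sum_range]
  simp only [Nat.add_sub_cancel]
  -- now both sums over range n with index j, k = 1 + j
  have hRHS : ∀ j ∈ Finset.range n,
      (-1 : ℝ) ^ ((1 + j) - 1) * (n.choose (1 + j) : ℝ) *
        ∑ l ∈ Finset.range (1 + j),
          (rising 1 l) ^ s * rising (1 - ((1 + j : ℕ) : ℝ)) l /
            ((rising 2 l) ^ s * (Nat.factorial l : ℝ)) =
      ∑ l ∈ Finset.range n,
        (-1 : ℝ) ^ (j + l) * (n.choose (j + 1) : ℝ) * (j.choose l : ℝ) / ((l + 1 : ℝ)) ^ s := by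
    intro j hj
    simp only [Finset.mem_range] at hj
    have h1 : (1 : ℕ) + j - 1 = j := by omega
    have hinner : ∑ l ∈ Finset.range (1 + j),
        (rising 1 l) ^ s * rising (1 - ((1 + j : ℕ) : ℝ)) l /
          ((rising 2 l) ^ s * (Nat.factorial l : ℝ)) =
        ∑ l ∈ Finset.range n, (-1 : ℝ) ^ l * (j.choose l : ℝ) / ((l + 1 : ℝ)) ^ s := by
      have heq : ∀ l ∈ Finset.range (1 + j),
          (rising 1 l) ^ s * rising (1 - ((1 + j : ℕ) : ℝ)) l /
            ((rising 2 l) ^ s * (Nat.factorial l : ℝ)) =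
          (-1 : ℝ) ^ l * (j.choose l : ℝ) / ((l + 1 : ℝ)) ^ s := by
        intro l hl
        simp only [Finset.mem_range] at hl
        have hlj : l ≤ j := by omega
        have hc : (1 : ℝ) - ((1 + j : ℕ) : ℝ) = -(j : ℝ) := by push_cast; ring
        rw [hc]
        exact term_eq s j l hlj
      rw [Finset.sum_congr rfl heq]
      apply Finset.sum_subset
      · intro x hx; simp only [Finset.mem_range] at *; omega
      · intro x _ hx
        simp only [Finset.mem_range, not_lt] at hx
        rw [Nat.choose_eq_zero_of_lt (by omega : j < x)]
        simp
    rw [h1, hinner, Finset.mul_sum]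
    apply Finset.sum_congr rfl
    intro l _
    have : (1 : ℕ) + j = j + 1 := by omega
    rw [this, pow_add]
    ring
  rw [Finset.sum_congr rfl hRHS, Finset.sum_comm]
  apply Finset.sum_congr rfl
  intro l hl
  simp only [Finset.mem_range] at hl
  have : ∑ j ∈ Finset.range n,
      (-1 : ℝ) ^ (j + l) * (n.choose (j + 1) : ℝ) * (j.choose l : ℝ) / ((l + 1 : ℝ)) ^ s =
      (∑ j ∈ Finset.range n, (-1 : ℝ) ^ (j + l) * (n.choose (j + 1) : ℝ) * (j.choose l : ℝ)) /
        ((l + 1 : ℝ)) ^ s := by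
    rw [Finset.sum_div]
  rw [this, key_one n l hl]
  push_cast
  ring
end
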